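/- arXiv:2309.02181 — 4 statements merged into one kernel-verified Lean document; each statement's English description precedes it below -/
import Mathlib

section
/- Let z ∈ ℂ with m = z² and let x₀ ∈ ℝ with x₀ ≠ 0. Then |Re z| < |x₀| if and only if 4x₀²·Re m − 4x₀⁴ + (Im m)² < 0; similarly |Re z| = |x₀| iff the expression equals 0, and |Re z| > |x₀| iff it is positive. -/
theorem Complex.four_mul_sq_mul_sq_re_sub_add_sq_im (z : ℂ) (x : ℝ) :
    4 * x ^ 2 * (z ^ 2).re - 4 * x ^ 4 + (z ^ 2).im ^ 2
      = 4 * (x ^ 2 + z.im ^ 2) * (z.re ^ 2 - x ^ 2) := by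
  simp only [pow_two, Complex.mul_re, Complex.mul_im]
  ring

theorem stmt0 (z m : ℂ) (hm : m = z ^ 2) (x₀ : ℝ) (hx₀ : x₀ ≠ 0) :
    (|z.re| < |x₀| ↔ 4 * x₀ ^ 2 * m.re - 4 * x₀ ^ 4 + m.im ^ 2 < 0) ∧
    (|z.re| = |x₀| ↔ 4 * x₀ ^ 2 * m.re - 4 * x₀ ^ 4 + m.im ^ 2 = 0) ∧
    (|z.re| > |x₀| ↔ 4 * x₀ ^ 2 * m.re - 4 * x₀ ^ 4 + m.im ^ 2 > 0) := by
  subst hm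
  have hc : 0 < 4 * (x₀ ^ 2 + z.im ^ 2) := by positivity
  rw [Complex.four_mul_sq_mul_sq_re_sub_add_sq_im]
  refine ⟨?_, ?_, ?_⟩
  · rw [← sq_lt_sq, ← sub_neg, mul_neg_iff]
    simp [hc, hc.not_gt]
  · rw [mul_eq_zero, or_iff_right hc.ne', sub_eq_zero, sq_eq_sq_iff_abs_eq_abs]
  · rw [gt_iff_lt, gt_iff_lt, mul_pos_iff_of_pos_left hc, sub_pos, sq_lt_sq]
end

section
/- Hinged boundary conditions satisfy the Lopatinskiĭ–Šapiro condition for the augmented operator: for σ ∈ ℝ and r > 0 (or σ ≠ 0), with b₁(ξ) = 1 and b₂(ξ) = −ξ², and ρ₁, ρ₂ the two roots with positive imaginary part of ξ ↦ σ⁴ + (ξ²+r²)², the determinant of the 2×2 matrix with rows (b₁(ρ₁), b₂(ρ₁)) and (b₁(ρ₂), b₂(ρ₂)) equals −2iσ², hence is nonzero whenever σ ≠ 0. -/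
/-!
The hinged determinant is `ρ₁² - ρ₂² = (ρ₁ - ρ₂)(ρ₁ + ρ₂) = (-2a)(2ib) = -4iab`, and `ab = σ²/2`
because the two radicands defining `a` and `b` multiply to `(√(σ⁴ + r⁴)² - r⁴)/4 = (σ²/2)²`.
-/

open Complex

theorem Real.sqrt_half_sub_mul_sqrt_half_add {c : ℝ} (hc : 0 ≤ c) (t : ℝ) :
    √((√(c ^ 2 + t ^ 2) - t) / 2) * √((√(c ^ 2 + t ^ 2) + t) / 2) = c / 2 := by
  have ht : t ≤ √(c ^ 2 + t ^ 2) :=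
    (le_abs_self t).trans <| Real.abs_le_sqrt (by nlinarith [sq_nonneg c])
  have hprod : (√(c ^ 2 + t ^ 2) - t) / 2 * ((√(c ^ 2 + t ^ 2) + t) / 2) = (c / 2) ^ 2 := by
    have hs : √(c ^ 2 + t ^ 2) ^ 2 = c ^ 2 + t ^ 2 := Real.sq_sqrt (by positivity)
    linear_combination hs / 4
  rw [← Real.sqrt_mul (by linarith), hprod, Real.sqrt_sq (by positivity)]

theorem stmt5_general (σ r : ℝ)
    (a b : ℝ)
    (ha : a = Real.sqrt ((Real.sqrt (σ ^ 4 + r ^ 4) - r ^ 2) / 2))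
    (hb : b = Real.sqrt ((Real.sqrt (σ ^ 4 + r ^ 4) + r ^ 2) / 2))
    (ρ₁ ρ₂ : ℂ)
    (hρ₁ : ρ₁ = -(a : ℂ) + (b : ℂ) * Complex.I)
    (hρ₂ : ρ₂ = (a : ℂ) + (b : ℂ) * Complex.I)
    (b₁ b₂ : ℂ → ℂ) (hb₁ : ∀ ξ, b₁ ξ = 1) (hb₂ : ∀ ξ, b₂ ξ = -ξ ^ 2) :
    Matrix.det !![b₁ ρ₁, b₂ ρ₁; b₁ ρ₂, b₂ ρ₂] = -2 * Complex.I * (σ : ℂ) ^ 2 ∧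
    (σ ≠ 0 → Matrix.det !![b₁ ρ₁, b₂ ρ₁; b₁ ρ₂, b₂ ρ₂] ≠ 0) := by
  have hab : a * b = σ ^ 2 / 2 := by
    rw [ha, hb, show σ ^ 4 + r ^ 4 = (σ ^ 2) ^ 2 + (r ^ 2) ^ 2 by ring]
    exact Real.sqrt_half_sub_mul_sqrt_half_add (sq_nonneg σ) _
  have hdet : Matrix.det !![b₁ ρ₁, b₂ ρ₁; b₁ ρ₂, b₂ ρ₂] = -2 * I * (σ : ℂ) ^ 2 := by
    have habC : (a : ℂ) * b = (σ : ℂ) ^ 2 / 2 := by exact_mod_cast congrArg ofReal hab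
    rw [Matrix.det_fin_two_of, hb₁, hb₁, hb₂, hb₂, hρ₁, hρ₂]
    linear_combination (-4 * I) * habC
  refine ⟨hdet, fun hσ => ?_⟩
  rw [hdet]
  exact mul_ne_zero (mul_ne_zero (by norm_num) I_ne_zero) (pow_ne_zero _ (ofReal_ne_zero.mpr hσ))

theorem stmt5 (σ r : ℝ) (hr : 0 ≤ r)
    (a b : ℝ)
    (ha : a = Real.sqrt ((Real.sqrt (σ ^ 4 + r ^ 4) - r ^ 2) / 2))
    (hb : b = Real.sqrt ((Real.sqrt (σ ^ 4 + r ^ 4) + r ^ 2) / 2))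
    (ρ₁ ρ₂ : ℂ)
    (hρ₁ : ρ₁ = -(a : ℂ) + (b : ℂ) * Complex.I)
    (hρ₂ : ρ₂ = (a : ℂ) + (b : ℂ) * Complex.I)
    (b₁ b₂ : ℂ → ℂ) (hb₁ : ∀ ξ, b₁ ξ = 1) (hb₂ : ∀ ξ, b₂ ξ = -ξ ^ 2) :
    Matrix.det !![b₁ ρ₁, b₂ ρ₁; b₁ ρ₂, b₂ ρ₂] = -2 * Complex.I * (σ : ℂ) ^ 2 ∧
    (σ ≠ 0 → Matrix.det !![b₁ ρ₁, b₂ ρ₁; b₁ ρ₂, b₂ ρ₂] ≠ 0) :=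
  stmt5_general σ r a b ha hb ρ₁ ρ₂ hρ₁ hρ₂ b₁ b₂ hb₁ hb₂
end

section
/- Let b₁, b₂ : ℂ → ℂ be polynomials. If ρ₁(h), ρ₂(h) are two families of complex numbers with ρ₂(h) = ρ₁(h) + h, ρ₁(h) → ρ as h → 0, and the determinant of the matrix with rows (b₁(ρ), b₂(ρ)) and (b₁'(ρ), b₂'(ρ)) is nonzero, then for all sufficiently small h ≠ 0 the determinant of the matrix with rows (b₁(ρ₁(h)), b₂(ρ₁(h))) and (b₁(ρ₂(h)), b₂(ρ₂(h))) is nonzero. -/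
/-!
Write `b(x + h) = b(x) + h · Δb(x, h)` with the divided difference `Δb` given by the Taylor
expansion of `b` at `x`: it is a polynomial in `(x, h)`, hence jointly continuous, and
`Δb(x, 0) = b'(x)`. The two-root determinant at `(ρ₁, ρ₁ + h)` is then `h` times
`b₁(ρ₁) Δb₂(ρ₁, h) - b₂(ρ₁) Δb₁(ρ₁, h)`, which tends to the Wronskian of `b₁, b₂` at `ρ`
as `(ρ₁, h) → (ρ, 0)`.
-/

open Topology Polynomial Finset

namespace Polynomial

section CommRing

variable {R : Type*} [CommRing R]

noncomputable def divDiff (p : R[X]) (x h : R) : R :=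
  ∑ i ∈ range (p.natDegree + 1), (hasseDeriv (i + 1) p).eval x * h ^ i

theorem eval_add_eq_add_mul_divDiff (p : R[X]) (x h : R) :
    p.eval (x + h) = p.eval x + h * p.divDiff x h := by
  have hdeg : (taylor x p).natDegree < p.natDegree + 2 := by
    rw [natDegree_taylor]; omega
  rw [add_comm x, ← taylor_eval, eval_eq_sum_range' hdeg, sum_range_succ', divDiff, mul_sum]
  simp only [taylor_coeff, hasseDeriv_zero, pow_zero, mul_one, LinearMap.id_apply, pow_succ]
  rw [add_comm]
  congr 1
  exact sum_congr rfl fun i _ => by ring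

theorem divDiff_zero_right (p : R[X]) (x : R) : p.divDiff x 0 = (derivative p).eval x := by
  simp [divDiff, sum_range_succ', hasseDeriv_one]

theorem eval_mul_eval_add_sub (b₁ b₂ : R[X]) (x h : R) :
    b₁.eval x * b₂.eval (x + h) - b₂.eval x * b₁.eval (x + h) =
      h * (b₁.eval x * b₂.divDiff x h - b₂.eval x * b₁.divDiff x h) := by
  rw [eval_add_eq_add_mul_divDiff b₁, eval_add_eq_add_mul_divDiff b₂]
  ring

end CommRing

theorem continuous_divDiff {R : Type*} [CommRing R] [TopologicalSpace R] [IsTopologicalRing R]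
    (p : R[X]) : Continuous fun q : R × R => p.divDiff q.1 q.2 :=
  continuous_finsetSum _ fun i _ =>
    ((hasseDeriv (i + 1) p).continuous.comp continuous_fst).mul (continuous_snd.pow i)

end Polynomial

theorem stmt10 (b₁ b₂ : Polynomial ℂ) (ρ : ℂ) (ρ₁ ρ₂ : ℂ → ℂ)
    (hsum : ∀ h, ρ₂ h = ρ₁ h + h)
    (hlim : Filter.Tendsto ρ₁ (𝓝[≠] (0 : ℂ)) (𝓝 ρ))
    (hdet : b₁.eval ρ * (Polynomial.derivative b₂).eval ρ
        - b₂.eval ρ * (Polynomial.derivative b₁).eval ρ ≠ 0) :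
    ∀ᶠ h in 𝓝[≠] (0 : ℂ),
      b₁.eval (ρ₁ h) * b₂.eval (ρ₂ h) - b₂.eval (ρ₁ h) * b₁.eval (ρ₂ h) ≠ 0 := by
  let Φ : ℂ × ℂ → ℂ := fun q =>
    b₁.eval q.1 * b₂.divDiff q.1 q.2 - b₂.eval q.1 * b₁.divDiff q.1 q.2
  have hΦ : Continuous Φ :=
    ((b₁.continuous.comp continuous_fst).mul (continuous_divDiff b₂)).sub
      ((b₂.continuous.comp continuous_fst).mul (continuous_divDiff b₁))
  have hpair : Filter.Tendsto (fun h => (ρ₁ h, h)) (𝓝[≠] 0) (𝓝 (ρ, 0)) :=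
    hlim.prodMk_nhds (Filter.tendsto_id.mono_left nhdsWithin_le_nhds)
  have hΦρ : Φ (ρ, 0) ≠ 0 := by simpa [Φ, divDiff_zero_right] using hdet
  filter_upwards [(hΦ.tendsto _).comp hpair |>.eventually_ne hΦρ, self_mem_nhdsWithin]
    with h hΦh hh
  rw [hsum, eval_mul_eval_add_sub]
  exact mul_ne_zero hh hΦh
end

section
/- Let h(t) = (1/2)(e^{−t}·cos(t − π/4) − e^{t}·cos(t + π/4)). For any 0 < a < b and t₀ > 0, there exists C₀ > 0 such that ∫_{at}^{bt} h(s)² ds ≥ C₀ for all t ≥ t₀. -/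
/-!
The square `h²` has the explicit primitive `H = oscExpSqPrimitive`, so the integral equals
`H (b t) - H (a t)`. For each `t > 0` it is positive, because `h` is real-analytic and
`h (π / 4) ≠ 0`, so `h` cannot vanish on an interval; by continuity it is then bounded below
on any compact range of `t`. For large `t` the term `e^{2 b t} / 32` of `H (b t)` dominates
and the integral is at least `1`.
-/
open Real Set Filter Topology

noncomputable def oscExp (t : ℝ) : ℝ :=
  (1 / 2) * (exp (-t) * cos (t - π / 4) - exp t * cos (t + π / 4))

noncomputable def oscExpSqPrimitive (s : ℝ) : ℝ :=
  exp (2 * s) * (2 - sin (2 * s) + cos (2 * s)) / 32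
    - exp (-(2 * s)) * (2 + sin (2 * s) + cos (2 * s)) / 32 - sin (2 * s) / 8

theorem continuous_oscExp : Continuous oscExp := by
  unfold oscExp; fun_prop

theorem analyticOnNhd_oscExp : AnalyticOnNhd ℝ oscExp univ := by
  intro x _; unfold oscExp; fun_prop

theorem oscExp_sq (t : ℝ) :
    oscExp t ^ 2 = (exp (-t) * (cos t + sin t) - exp t * (cos t - sin t)) ^ 2 / 8 := by
  have hsqrt : √2 ^ 2 = 2 := sq_sqrt zero_le_two
  rw [oscExp, cos_sub, cos_add, cos_pi_div_four, sin_pi_div_four]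
  linear_combination (exp (-t) * (cos t + sin t) - exp t * (cos t - sin t)) ^ 2 / 16 * hsqrt

theorem hasDerivAt_oscExpSqPrimitive (s : ℝ) :
    HasDerivAt oscExpSqPrimitive (oscExp s ^ 2) s := by
  have h2 : HasDerivAt (fun x : ℝ => 2 * x) 2 s := by simpa using (hasDerivAt_id s).const_mul 2
  have := (((h2.exp.mul ((h2.sin.const_sub 2).add h2.cos)).div_const 32).sub
    ((h2.neg.exp.mul ((h2.sin.const_add 2).add h2.cos)).div_const 32)).sub (h2.sin.div_const 8)
  refine HasDerivAt.congr_deriv (f := oscExpSqPrimitive) this ?_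
  have hexp : exp s * exp (-s) = 1 := by rw [← exp_add, add_neg_cancel, exp_zero]
  simp only [Pi.add_apply, Pi.neg_apply]
  rw [oscExp_sq, show -(2 * s) = -s + -s by ring, two_mul, exp_add, exp_add, sin_add, cos_add]
  linear_combination ((cos s) ^ 2 - (sin s) ^ 2) / 4 * hexp
    - ((exp s) ^ 2 + (exp (-s)) ^ 2) / 8 * sin_sq_add_cos_sq s

@[fun_prop]
theorem continuous_oscExpSqPrimitive : Continuous oscExpSqPrimitive := by
  unfold oscExpSqPrimitive; fun_prop

theorem integral_oscExp_sq (p q : ℝ) :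
    ∫ s in p..q, oscExp s ^ 2 = oscExpSqPrimitive q - oscExpSqPrimitive p :=
  intervalIntegral.integral_eq_sub_of_hasDerivAt (fun x _ => hasDerivAt_oscExpSqPrimitive x)
    ((continuous_oscExp.pow 2).intervalIntegrable p q)

theorem oscExp_pi_div_four : oscExp (π / 4) ≠ 0 := by
  rw [oscExp, show π / 4 + π / 4 = π / 2 by ring, sub_self, cos_zero, cos_pi_div_two]
  simp [exp_ne_zero]

theorem exists_mem_Ioo_oscExp_ne_zero {p q : ℝ} (hpq : p < q) : ∃ c ∈ Ioo p q, oscExp c ≠ 0 := by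
  by_contra! hzero
  have hmid : (p + q) / 2 ∈ Ioo p q := ⟨by linarith, by linarith⟩
  have hev : oscExp =ᶠ[𝓝 ((p + q) / 2)] 0 :=
    eventually_of_mem (Ioo_mem_nhds hmid.1 hmid.2) hzero
  exact oscExp_pi_div_four <| analyticOnNhd_oscExp.eqOn_zero_of_preconnected_of_eventuallyEq_zero
    isPreconnected_univ (mem_univ _) hev (mem_univ _)

theorem integral_oscExp_sq_pos {p q : ℝ} (hpq : p < q) : 0 < ∫ s in p..q, oscExp s ^ 2 := by
  obtain ⟨c, hc, hne⟩ := exists_mem_Ioo_oscExp_ne_zero hpq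
  exact intervalIntegral.integral_pos hpq (continuous_oscExp.pow 2).continuousOn
    (fun x _ => sq_nonneg _) ⟨c, Ioo_subset_Icc_self hc, by positivity⟩

theorem exp_two_mul_div_sub_le_oscExpSqPrimitive {s : ℝ} (hs : 0 ≤ s) :
    exp (2 * s) / 64 - 1 / 4 ≤ oscExpSqPrimitive s := by
  have hsin_sub_cos : sin (2 * s) - cos (2 * s) ≤ 3 / 2 := by
    nlinarith [sin_sq_add_cos_sq (2 * s), sq_nonneg (sin (2 * s) + cos (2 * s))]
  have hdecay : exp (-(2 * s)) ≤ 1 := exp_le_one_iff.mpr (by linarith)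
  have hgrowth : exp (2 * s) / 2 ≤ exp (2 * s) * (2 - sin (2 * s) + cos (2 * s)) := by
    nlinarith [exp_pos (2 * s)]
  have hsmall : exp (-(2 * s)) * (2 + sin (2 * s) + cos (2 * s)) ≤ 4 := by
    nlinarith [exp_pos (-(2 * s)), sin_le_one (2 * s), cos_le_one (2 * s),
      neg_one_le_sin (2 * s), neg_one_le_cos (2 * s)]
  rw [oscExpSqPrimitive]
  linarith [sin_le_one (2 * s)]

theorem oscExpSqPrimitive_le (s : ℝ) : oscExpSqPrimitive s ≤ exp (2 * s) / 8 + 1 / 8 := by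
  have hgrowth : exp (2 * s) * (2 - sin (2 * s) + cos (2 * s)) ≤ exp (2 * s) * 4 := by
    nlinarith [exp_pos (2 * s), neg_one_le_sin (2 * s), cos_le_one (2 * s)]
  have hdecay : 0 ≤ exp (-(2 * s)) * (2 + sin (2 * s) + cos (2 * s)) :=
    mul_nonneg (exp_pos _).le (by linarith [neg_one_le_sin (2 * s), neg_one_le_cos (2 * s)])
  rw [oscExpSqPrimitive]
  linarith [neg_one_le_sin (2 * s)]

theorem one_le_oscExpSqPrimitive_sub {p q : ℝ} (hp : 0 ≤ p) (hpq : p + 50 ≤ q) :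
    1 ≤ oscExpSqPrimitive q - oscExpSqPrimitive p := by
  have hgap : 100 * exp (2 * p) ≤ exp (2 * q) := by
    have : 100 ≤ exp (2 * q - 2 * p) := by linarith [add_one_le_exp (2 * q - 2 * p)]
    calc 100 * exp (2 * p) ≤ exp (2 * q - 2 * p) * exp (2 * p) := by gcongr
      _ = exp (2 * q) := by rw [← exp_add, sub_add_cancel]
  have hp1 : 1 ≤ exp (2 * p) := one_le_exp (by linarith)
  linarith [exp_two_mul_div_sub_le_oscExpSqPrimitive (hp.trans (by linarith) : 0 ≤ q),
    oscExpSqPrimitive_le p]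

theorem exists_pos_forall_le_of_continuousOn_Icc {α : Type*} [LinearOrder α] [TopologicalSpace α]
    [CompactIccSpace α] {F : α → ℝ} {t₀ T : α} {c : ℝ} (hc : 0 < c)
    (hF : ContinuousOn F (Icc t₀ T)) (hpos : ∀ t ∈ Icc t₀ T, 0 < F t)
    (htail : ∀ t ≥ T, c ≤ F t) : ∃ C > 0, ∀ t ≥ t₀, C ≤ F t := by
  rcases (Icc t₀ T).eq_empty_or_nonempty with hempty | hne
  · refine ⟨c, hc, fun t ht => htail t ?_⟩
    by_contra! htT
    exact hempty.subset ⟨ht, htT.le⟩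
  obtain ⟨x₀, hx₀, hmin⟩ := isCompact_Icc.exists_isMinOn hne hF
  refine ⟨min (F x₀) c, lt_min (hpos x₀ hx₀) hc, fun t ht => ?_⟩
  rcases le_or_gt t T with htT | htT
  · exact (min_le_left _ _).trans (hmin ⟨ht, htT⟩)
  · exact (min_le_right _ _).trans (htail t htT.le)

theorem stmt15 (h : ℝ → ℝ)
    (hh : ∀ t, h t = (1 / 2) * (Real.exp (-t) * Real.cos (t - Real.pi / 4)
        - Real.exp t * Real.cos (t + Real.pi / 4)))
    (a b t₀ : ℝ) (ha : 0 < a) (hab : a < b) (ht₀ : 0 < t₀) :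
    ∃ C₀ > 0, ∀ t ≥ t₀, C₀ ≤ ∫ s in (a * t)..(b * t), (h s) ^ 2 := by
  obtain rfl : h = oscExp := funext hh
  refine exists_pos_forall_le_of_continuousOn_Icc (T := max t₀ (50 / (b - a))) one_pos ?_
    (fun t ht => integral_oscExp_sq_pos ?_) (fun t ht => ?_)
  · simp only [integral_oscExp_sq]
    fun_prop
  · exact mul_lt_mul_of_pos_right hab (ht₀.trans_le ht.1)
  · have hgap : 50 ≤ (b - a) * t :=
      (div_le_iff₀' (sub_pos.mpr hab)).mp ((le_max_right _ _).trans ht)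
    have ht_pos : 0 < t := ht₀.trans_le ((le_max_left _ _).trans ht)
    rw [integral_oscExp_sq]
    exact one_le_oscExpSqPrimitive_sub (by positivity) (by linarith)
end
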